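/- arXiv:2311.08814 — 2 statements merged into one kernel-verified Lean document; each statement's English description precedes it below -/
import Mathlib

section
/- Let G be a topological group, K a strongly neutral subgroup, and H a closed subgroup of G. Then every point of the double coset space K\G/H is closed, i.e., K\G/H is a T1 space. -/
open scoped Pointwise

instance dosetQuotientTopology {G : Type*} [Group G] [TopologicalSpace G] (K H : Set G) :
    TopologicalSpace (DoubleCoset.Quotient K H) :=
  inferInstanceAs (TopologicalSpace (Quotient (DoubleCoset.setoid K H)))

section

variable {G : Type*} [Group G] [TopologicalSpace G]

def IsStronglyNeutral (K : Set G) : Prop :=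
  ∀ O : Set G, IsOpen O → K ⊆ O → ∃ V : Set G, IsOpen V ∧ (1 : G) ∈ V ∧ K * V ⊆ O

/-- If `g ∉ K * C`, then `K g` misses `C`; strong neutrality thickens this to `K V g`, and `V g`
is a neighbourhood of `g` missing `K * C`. -/
theorem IsStronglyNeutral.isClosed_mul [ContinuousMul G] {K : Subgroup G}
    (hK : IsStronglyNeutral (K : Set G)) {C : Set G} (hC : IsClosed C) :
    IsClosed ((K : Set G) * C) := by
  refine isOpen_compl_iff.mp (isOpen_iff_forall_mem_open.mpr fun g hg => ?_)
  have hKO : (K : Set G) ⊆ (· * g) ⁻¹' Cᶜ := fun k hk hkg =>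
    hg ⟨k⁻¹, K.inv_mem hk, k * g, hkg, inv_mul_cancel_left k g⟩
  obtain ⟨V, hV, hV1, hKV⟩ :=
    hK _ (hC.isOpen_compl.preimage (continuous_mul_const g)) hKO
  refine ⟨(· * g⁻¹) ⁻¹' V, ?_, hV.preimage (continuous_mul_const g⁻¹), by simpa using hV1⟩
  rintro _ hw ⟨k, hk, c, hc, rfl⟩
  have hcO : k⁻¹ * (k * c * g⁻¹) ∈ (· * g) ⁻¹' Cᶜ := hKV ⟨k⁻¹, K.inv_mem hk, _, hw, rfl⟩
  exact hcO (by simpa [mul_assoc] using hc)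

theorem DoubleCoset.t1Space_quotient_of_isClosed {K H : Subgroup G}
    (h : ∀ a : G, IsClosed (doubleCoset a K H)) : T1Space (Quotient (K : Set G) H) := by
  refine ⟨fun q => ?_⟩
  have hfiber : Quotient.mk _ ⁻¹' {q} = quotToDoubleCoset K H q := by
    ext a
    exact (mem_quotToDoubleCoset_iff q a).symm
  exact isQuotientMap_quotient_mk'.isClosed_preimage.mp (hfiber ▸ h q.out)

end

/-- if `K` is strongly neutral and `H` is closed, the double coset
space `K\G/H` is T1. -/
theorem stmt_3 {G : Type*} [Group G] [TopologicalSpace G] [IsTopologicalGroup G]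
    (K H : Subgroup G)
    (hK : ∀ O : Set G, IsOpen O → (K : Set G) ⊆ O →
      ∃ V : Set G, IsOpen V ∧ (1 : G) ∈ V ∧ (K : Set G) * V ⊆ O)
    (hH : IsClosed (H : Set G)) :
    T1Space (DoubleCoset.Quotient (K : Set G) (H : Set G)) := by
  refine DoubleCoset.t1Space_quotient_of_isClosed fun a => ?_
  rw [DoubleCoset.doubleCoset, mul_assoc, Set.singleton_mul]
  exact IsStronglyNeutral.isClosed_mul hK (hH.leftCoset a)
end

section
/- Let G be a topological group possessing a strong q-point and H a closed subgroup of G. Then there exist a metrizable space M and a continuous open and closed mapping f : G/H → M such that f⁻¹(F) is sequentially compact for every sequentially compact subset F of M. -/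
/-!
Translating the strong q-point to `1` and shrinking, one gets neighbourhoods `V n` of `1` with
`V n⁻¹ = V n` and `V (n + 1) * V (n + 1) ⊆ V n` such that every sequence with `v n ∈ V n` has a
subsequence converging to a point of the subgroup `K = ⋂ n, V n`. The relations
`{(x, v • x) | v ∈ V n}` form a countable base of a uniformity on `G ⧸ H`, so its separation
quotient `M` is metrizable; since `H` is closed, two points are identified in `M` exactly when
they lie in the same `K`-orbit, so `M` is the double coset space `K \ G / H`. The subsequence
property turns every open set of `G ⧸ H` containing a `K`-orbit into a `V n`-neighbourhood of it,
which makes the projection to `M` open and closed, and lifts convergent sequences of `M` to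
convergent subsequences in `G ⧸ H`.
-/

open Filter Topology Set Uniformity

def IsStrongQPoint {X : Type*} [TopologicalSpace X] (x : X) : Prop :=
  ∃ U : ℕ → Set X, (∀ n, IsOpen (U n) ∧ x ∈ U n) ∧
    ∀ u : ℕ → X, (∀ n, u n ∈ U n) → ∃ φ : ℕ → ℕ, StrictMono φ ∧ ∃ p : X, Tendsto (u ∘ φ) atTop (𝓝 p)

theorem exists_nhds_one_inv_split {G : Type*} [Group G] [TopologicalSpace G] [IsTopologicalGroup G]
    {s : Set G} (hs : s ∈ 𝓝 1) :
    ∃ t ∈ 𝓝 (1 : G), (∀ a ∈ t, a⁻¹ ∈ t) ∧ ∀ a ∈ t, ∀ b ∈ t, a * b ∈ s := by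
  obtain ⟨t, ht, hts⟩ := exists_nhds_one_split hs
  exact ⟨t ∩ t⁻¹, inter_mem ht (inv_mem_nhds_one G ht),
    fun a ha => ⟨ha.2, by simpa using ha.1⟩, fun a ha b hb => hts a ha.1 b hb.1⟩

instance SeparationQuotient.isCountablyGenerated_uniformity {α : Type*} [UniformSpace α]
    [(𝓤 α).IsCountablyGenerated] : (𝓤 (SeparationQuotient α)).IsCountablyGenerated := by
  rw [SeparationQuotient.uniformity_eq]
  infer_instance

theorem QuotientGroup.isOpenMap_smul_coset {G : Type*} [Group G] [TopologicalSpace G]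
    [IsTopologicalGroup G] {H : Subgroup G} (x : G ⧸ H) : IsOpenMap (· • x : G → G ⧸ H) := by
  induction x using QuotientGroup.induction_on with
  | H g => exact QuotientGroup.isOpenMap_coe.comp (isOpenMap_mul_right g)

structure HalvingChain (G : Type*) [Group G] where
  V : ℕ → Set G
  one_mem : ∀ n, (1 : G) ∈ V n
  inv_mem : ∀ n, ∀ a ∈ V n, a⁻¹ ∈ V n
  mul_mem : ∀ n, ∀ a ∈ V (n + 1), ∀ b ∈ V (n + 1), a * b ∈ V n

namespace HalvingChain

variable {G : Type*} [Group G] (c : HalvingChain G)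

theorem antitone : Antitone c.V :=
  antitone_nat_of_succ_le fun n a ha => mul_one a ▸ c.mul_mem n a ha 1 (c.one_mem _)

def ker : Subgroup G where
  carrier := ⋂ n, c.V n
  one_mem' := mem_iInter.2 c.one_mem
  mul_mem' ha hb := mem_iInter.2 fun n => c.mul_mem n _ (mem_iInter.1 ha _) _ (mem_iInter.1 hb _)
  inv_mem' ha := mem_iInter.2 fun n => c.inv_mem n _ (mem_iInter.1 ha n)

theorem mem_ker {k : G} : k ∈ c.ker ↔ ∀ n, k ∈ c.V n := mem_iInter

def SubseqTendsto [TopologicalSpace G] : Prop :=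
  ∀ v : ℕ → G, (∀ n, v n ∈ c.V n) →
    ∃ p ∈ c.ker, ∃ φ : ℕ → ℕ, StrictMono φ ∧ Tendsto (v ∘ φ) atTop (𝓝 p)

section IsTopologicalGroup

variable [TopologicalSpace G] [IsTopologicalGroup G]

theorem mem_ker_of_tendsto (hV : ∀ n, c.V n ∈ 𝓝 1) {v : ℕ → G} (hv : ∀ n, v n ∈ c.V n)
    {φ : ℕ → ℕ} (hφ : StrictMono φ) {p : G} (hp : Tendsto (v ∘ φ) atTop (𝓝 p)) : p ∈ c.ker := by
  refine c.mem_ker.2 fun n => ?_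
  have hclosure : closure (c.V (n + 1)) ⊆ c.V n :=
    closure_subset_of_mem_nhds_one_of_inv_mul_left_subset (hV _) (c.inv_mem _)
      (mul_subset_iff.2 (c.mul_mem n))
  refine hclosure (mem_closure_of_tendsto hp ?_)
  exact (hφ.tendsto_atTop.eventually_ge_atTop (n + 1)).mono fun j hj => c.antitone hj (hv _)

theorem exists_subset (W : ℕ → Set G) (hW : ∀ n, W n ∈ 𝓝 1) :
    ∃ c : HalvingChain G, (∀ n, c.V n ∈ 𝓝 1) ∧ ∀ n, c.V n ⊆ W n := by
  choose! T hT hTinv hTmul using fun s (hs : s ∈ 𝓝 (1 : G)) => exists_nhds_one_inv_split hs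
  have hTsub : ∀ s ∈ 𝓝 (1 : G), T s ⊆ s := fun s hs a ha =>
    mul_one a ▸ hTmul s hs a ha 1 (mem_of_mem_nhds (hT s hs))
  -- the chain is `V n = T (S n)`, where `S (n + 1) = V n ∩ W (n + 1)`
  let S : ℕ → Set G := fun n => Nat.rec (W 0) (fun n s => T s ∩ W (n + 1)) n
  have hS : ∀ n, S n ∈ 𝓝 1 := by
    intro n
    induction n with
    | zero => exact hW 0
    | succ n ih => exact inter_mem (hT _ ih) (hW _)
  have hSW : ∀ n, S n ⊆ W n := by
    rintro (_ | n)
    exacts [subset_rfl, inter_subset_right]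
  refine ⟨⟨fun n => T (S n), fun n => mem_of_mem_nhds (hT _ (hS n)), fun n => hTinv _ (hS n),
    fun n a ha b hb => (hTmul _ (hS (n + 1)) a ha b hb).1⟩, fun n => hT _ (hS n),
    fun n => (hTsub _ (hS n)).trans (hSW n)⟩

end IsTopologicalGroup

end HalvingChain

theorem IsStrongQPoint.exists_halvingChain {G : Type*} [Group G] [TopologicalSpace G]
    [IsTopologicalGroup G] {x : G} (hx : IsStrongQPoint x) :
    ∃ c : HalvingChain G, (∀ n, c.V n ∈ 𝓝 1) ∧ c.SubseqTendsto := by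
  obtain ⟨U, hU, hconv⟩ := hx
  have hW : ∀ n, (x * ·) ⁻¹' U n ∈ 𝓝 1 := fun n =>
    ((hU n).1.preimage (continuous_const_mul x)).mem_nhds (by simpa using (hU n).2)
  obtain ⟨c, hV, hVU⟩ := HalvingChain.exists_subset _ hW
  refine ⟨c, hV, fun v hv => ?_⟩
  obtain ⟨φ, hφ, q, hq⟩ := hconv (fun n => x * v n) fun n => hVU n (hv n)
  have hlim : Tendsto (v ∘ φ) atTop (𝓝 (x⁻¹ * q)) := by
    simpa [Function.comp_def] using hq.const_mul x⁻¹
  exact ⟨x⁻¹ * q, c.mem_ker_of_tendsto hV hv hφ hlim, φ, hφ, hlim⟩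

namespace HalvingChain

variable {G : Type*} [Group G] (c : HalvingChain G)

def Uniformized (_c : HalvingChain G) (X : Type*) : Type _ := X

section Uniformity

variable (X : Type*) [MulAction G X]

def toUniformized : X ≃ c.Uniformized X := Equiv.refl X

instance : MulAction G (c.Uniformized X) := ‹MulAction G X›

def entourage (n : ℕ) : Set (c.Uniformized X × c.Uniformized X) := {p | ∃ v ∈ c.V n, v • p.1 = p.2}

theorem entourage_antitone : Antitone (c.entourage X) := by
  rintro m n hmn _ ⟨v, hv, hvp⟩
  exact ⟨v, c.antitone hmn hv, hvp⟩

theorem hasBasis_iInf_entourage :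
    (⨅ n, 𝓟 (c.entourage X n)).HasBasis (fun _ => True) (c.entourage X) :=
  (HasAntitoneBasis.iInf_principal (c.entourage_antitone X)).toHasBasis

instance : UniformSpace (c.Uniformized X) := .ofCore <| .mk' (⨅ n, 𝓟 (c.entourage X n))
  (fun r hr x => by
    obtain ⟨n, -, hn⟩ := (c.hasBasis_iInf_entourage X).mem_iff.1 hr
    exact hn ⟨1, c.one_mem n, one_smul G x⟩)
  (fun r hr => by
    obtain ⟨n, -, hn⟩ := (c.hasBasis_iInf_entourage X).mem_iff.1 hr
    refine mem_of_superset ((c.hasBasis_iInf_entourage X).mem_of_mem (i := n) trivial) ?_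
    rintro ⟨x, y⟩ ⟨v, hv, hvy⟩
    obtain rfl : v • x = y := hvy
    exact hn ⟨v⁻¹, c.inv_mem n v hv, inv_smul_smul v x⟩)
  (fun r hr => by
    obtain ⟨n, -, hn⟩ := (c.hasBasis_iInf_entourage X).mem_iff.1 hr
    refine ⟨c.entourage X (n + 1), (c.hasBasis_iInf_entourage X).mem_of_mem trivial, ?_⟩
    rintro ⟨x, z⟩ ⟨y, ⟨v, hv, hvy⟩, ⟨w, hw, hwz⟩⟩
    obtain rfl : v • x = y := hvy
    obtain rfl : w • v • x = z := hwz
    exact hn ⟨w * v, c.mul_mem n w hw v hv, mul_smul w v x⟩)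

theorem hasBasis_uniformity : (𝓤 (c.Uniformized X)).HasBasis (fun _ => True) (c.entourage X) :=
  c.hasBasis_iInf_entourage X

instance : (𝓤 (c.Uniformized X)).IsCountablyGenerated := (c.hasBasis_uniformity X).isCountablyGenerated

theorem hasBasis_nhds (x : c.Uniformized X) :
    (𝓝 x).HasBasis (fun _ => True) fun n => (· • x) '' c.V n :=
  nhds_basis_uniformity' (c.hasBasis_uniformity X)

def orbitMap (x : X) : SeparationQuotient (c.Uniformized X) := SeparationQuotient.mk (c.toUniformized X x)

variable {X}

theorem orbitMap_surjective : Function.Surjective (c.orbitMap X) :=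
  SeparationQuotient.surjective_mk.comp (c.toUniformized X).surjective

theorem hasBasis_nhds_orbitMap (x : X) :
    (𝓝 (c.orbitMap X x)).HasBasis (fun _ => True)
      fun n => (fun v => c.orbitMap X (v • x)) '' c.V n := by
  rw [orbitMap, ← SeparationQuotient.map_mk_nhds]
  have h := (c.hasBasis_nhds X (c.toUniformized X x)).map SeparationQuotient.mk
  simp only [image_image] at h
  exact h

theorem isOpen_iff {s : Set (SeparationQuotient (c.Uniformized X))} :
    IsOpen s ↔ ∀ x, c.orbitMap X x ∈ s → ∃ n, ∀ v ∈ c.V n, c.orbitMap X (v • x) ∈ s := by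
  rw [isOpen_iff_mem_nhds, c.orbitMap_surjective.forall]
  refine forall_congr' fun x => imp_congr_right fun _ => ?_
  simp only [(c.hasBasis_nhds_orbitMap x).mem_iff, true_and, image_subset_iff]
  rfl

theorem orbitMap_eq_orbitMap_iff {x y : X} :
    c.orbitMap X x = c.orbitMap X y ↔ ∀ n, ∃ v ∈ c.V n, v • x = y := by
  rw [orbitMap, orbitMap, SeparationQuotient.mk_eq_mk,
    (c.hasBasis_uniformity X).inseparable_iff_uniformity]
  simp only [forall_const]
  rfl

theorem orbitMap_smul_of_mem_ker {k : G} (hk : k ∈ c.ker) (x : X) :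
    c.orbitMap X (k • x) = c.orbitMap X x :=
  c.orbitMap_eq_orbitMap_iff.2 fun n =>
    ⟨k⁻¹, c.mem_ker.1 (c.ker.inv_mem hk) n, inv_smul_smul k x⟩

end Uniformity

section Topology

variable {X : Type*} [MulAction G X] [TopologicalSpace G] [TopologicalSpace X]

theorem continuous_orbitMap (hV : ∀ n, c.V n ∈ 𝓝 1) (hX : ∀ x : X, IsOpenMap (· • x : G → X)) :
    Continuous (c.orbitMap X) := by
  refine continuous_def.2 fun s hs => isOpen_iff_mem_nhds.2 fun x hx => ?_
  obtain ⟨n, hn⟩ := c.isOpen_iff.1 hs x hx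
  have hnhds : (· • x) '' c.V n ∈ 𝓝 x := by
    simpa only [one_smul] using (hX x).image_mem_nhds (hV n)
  exact mem_of_superset hnhds (image_subset_iff.2 hn)

variable [ContinuousSMul G X] (hc : c.SubseqTendsto)
include hc

theorem exists_mem_ker_smul_eq [T1Space X] {x y : X} (h : c.orbitMap X x = c.orbitMap X y) :
    ∃ k ∈ c.ker, k • x = y := by
  choose v hv hvy using c.orbitMap_eq_orbitMap_iff.1 h
  obtain ⟨p, hp, φ, -, hlim⟩ := hc v hv
  have hconst : Tendsto (fun _ : ℕ => y) atTop (𝓝 (p • x)) := by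
    simpa only [Function.comp_apply, hvy] using hlim.smul_const x
  exact ⟨p, hp, (tendsto_const_nhds_iff.1 hconst).symm⟩

theorem exists_smul_eq_of_orbitMap_eq [T1Space X] {n : ℕ} {v : G} (hv : v ∈ c.V (n + 1))
    {x y : X} (h : c.orbitMap X (v • x) = c.orbitMap X y) : ∃ w ∈ c.V n, w • x = y := by
  obtain ⟨k, hk, rfl⟩ := c.exists_mem_ker_smul_eq hc h
  exact ⟨k * v, c.mul_mem n k (c.mem_ker.1 hk _) v hv, mul_smul k v x⟩

theorem exists_forall_smul_mem {S : Set X} (hS : IsOpen S) {x : X}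
    (hx : ∀ k ∈ c.ker, k • x ∈ S) : ∃ n, ∀ v ∈ c.V n, v • x ∈ S := by
  by_contra! h
  choose v hv hvS using h
  obtain ⟨p, hp, φ, -, hlim⟩ := hc v hv
  obtain ⟨j, hj⟩ := ((hlim.smul_const x).eventually (hS.mem_nhds (hx p hp))).exists
  exact hvS _ hj

theorem isOpenMap_orbitMap [T1Space X] : IsOpenMap (c.orbitMap X) := by
  intro O hO
  have hsat : IsOpen (c.orbitMap X ⁻¹' (c.orbitMap X '' O)) := by
    refine isOpen_iff_mem_nhds.2 fun y ⟨x, hx, hxy⟩ => ?_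
    obtain ⟨k, hk, rfl⟩ := c.exists_mem_ker_smul_eq hc hxy
    refine mem_of_superset ((hO.smul k).mem_nhds (smul_mem_smul_set hx)) ?_
    rintro _ ⟨z, hz, rfl⟩
    exact ⟨z, hz, (c.orbitMap_smul_of_mem_ker hk z).symm⟩
  refine c.isOpen_iff.2 fun x hx => c.exists_forall_smul_mem hc hsat fun k hk => ?_
  rwa [mem_preimage, c.orbitMap_smul_of_mem_ker hk]

theorem isClosedMap_orbitMap [T1Space X] : IsClosedMap (c.orbitMap X) := by
  intro C hC
  refine isOpen_compl_iff.1 (c.isOpen_iff.2 fun x hx => ?_)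
  obtain ⟨n, hn⟩ := c.exists_forall_smul_mem hc hC.isOpen_compl fun k hk hkx =>
    hx ⟨k • x, hkx, c.orbitMap_smul_of_mem_ker hk x⟩
  refine ⟨n + 1, fun v hv ⟨y, hy, hyv⟩ => ?_⟩
  obtain ⟨w, hw, rfl⟩ := c.exists_smul_eq_of_orbitMap_eq hc hv hyv.symm
  exact hn w hw hy

theorem isSeqCompact_preimage_orbitMap [T1Space X] {F : Set (SeparationQuotient (c.Uniformized X))}
    (hF : IsSeqCompact F) : IsSeqCompact (c.orbitMap X ⁻¹' F) := by
  intro a ha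
  obtain ⟨m, hm, φ, hφ, hlim⟩ := hF ha
  obtain ⟨x, rfl⟩ := c.orbitMap_surjective m
  have hev : ∀ n, ∀ᶠ j in atTop, ∃ v ∈ c.V n, v • x = a (φ j) := fun n =>
    (hlim.eventually ((c.hasBasis_nhds_orbitMap x).mem_of_mem (i := n + 1) trivial)).mono
      fun j ⟨v, hv, hvj⟩ => c.exists_smul_eq_of_orbitMap_eq hc hv hvj
  obtain ⟨ψ, hψ, hψv⟩ := extraction_forall_of_eventually hev
  choose v hv hva using hψv
  obtain ⟨p, hp, χ, hχ, hvp⟩ := hc v hv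
  refine ⟨p • x, by rwa [mem_preimage, c.orbitMap_smul_of_mem_ker hp], φ ∘ ψ ∘ χ,
    hφ.comp (hψ.comp hχ), ?_⟩
  have hsub : a ∘ (φ ∘ ψ ∘ χ) = fun j => v (χ j) • x := funext fun j => (hva (χ j)).symm
  exact hsub ▸ hvp.smul_const x

end Topology

end HalvingChain

theorem stmt_16_general {G : Type u} [Group G] [TopologicalSpace G] [IsTopologicalGroup G]
    (hq : ∃ (x : G) (U : ℕ → Set G), (∀ n, IsOpen (U n) ∧ x ∈ U n) ∧
      ∀ u : ℕ → G, (∀ n, u n ∈ U n) →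
        ∃ φ : ℕ → ℕ, StrictMono φ ∧ ∃ p : G, Tendsto (u ∘ φ) atTop (𝓝 p))
    (H : Subgroup G) (hH : IsClosed (H : Set G)) :
    ∃ (M : Type u) (_ : TopologicalSpace M) (_ : TopologicalSpace.MetrizableSpace M)
      (f : G ⧸ H → M), Continuous f ∧ IsOpenMap f ∧ IsClosedMap f ∧
        ∀ F : Set M, IsSeqCompact F → IsSeqCompact (f ⁻¹' F) := by
  obtain ⟨x, hx⟩ := hq
  obtain ⟨c, hV, hc⟩ := IsStrongQPoint.exists_halvingChain hx
  have : T1Space (G ⧸ H) := QuotientGroup.t1Space_iff.2 hH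
  exact ⟨_, _, UniformSpace.metrizableSpace, c.orbitMap (G ⧸ H),
    c.continuous_orbitMap hV QuotientGroup.isOpenMap_smul_coset, c.isOpenMap_orbitMap hc,
    c.isClosedMap_orbitMap hc, fun F => c.isSeqCompact_preimage_orbitMap hc⟩

/-- if a topological group `G` has a strong q-point and `H` is a closed
subgroup, then `G/H` admits a continuous, open and closed map `f` onto a metrizable
space such that preimages of sequentially compact sets are sequentially compact. -/
theorem stmt_16 {G : Type u} [Group G] [TopologicalSpace G] [IsTopologicalGroup G] [T2Space G]
    (hq : ∃ (x : G) (U : ℕ → Set G), (∀ n, IsOpen (U n) ∧ x ∈ U n) ∧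
      ∀ u : ℕ → G, (∀ n, u n ∈ U n) →
        ∃ φ : ℕ → ℕ, StrictMono φ ∧ ∃ p : G, Tendsto (u ∘ φ) atTop (𝓝 p))
    (H : Subgroup G) (hH : IsClosed (H : Set G)) :
    ∃ (M : Type u) (_ : TopologicalSpace M) (_ : TopologicalSpace.MetrizableSpace M)
      (f : G ⧸ H → M), Continuous f ∧ IsOpenMap f ∧ IsClosedMap f ∧
        ∀ F : Set M, IsSeqCompact F → IsSeqCompact (f ⁻¹' F) :=
  stmt_16_general hq H hH
end
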